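/- arXiv:2604.22041 — 7 statements merged into one kernel-verified Lean document; each statement's English description precedes it below -/
import Mathlib

section
/- Let (u1, v1) and (u2, v2) be endpoints of two acyclic directed paths in a DAG that share at least one node. Let x be the first shared node (as given by the decomposition where the prefixes of the two paths before x are disjoint). Then the path P from u1 to u2 formed by following the first path from u1 to x and then the reverse of the second path from x back to u2 is acyclic, and x is a collider on P. -/
section CausalDefs

variable {V : Type}

/-- The edge relation has no directed cycles. -/
def AcyclicRel (E : V → V → Prop) : Prop := ∀ v, ¬ Relation.TransGen E v v

/-- `b` is a mediator on the (undirected) path `l`. -/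
def Mediator (E : V → V → Prop) (l : List V) (b : V) : Prop :=
  ∃ a c, [a, b, c] <:+: l ∧ ((E a b ∧ E b c) ∨ (E b a ∧ E c b))

/-- `b` is a confounder on the (undirected) path `l`. -/
def Confounder (E : V → V → Prop) (l : List V) (b : V) : Prop :=
  ∃ a c, [a, b, c] <:+: l ∧ E b a ∧ E b c

/-- `b` is a collider on the (undirected) path `l`. -/
def Collider (E : V → V → Prop) (l : List V) (b : V) : Prop :=
  ∃ a c, [a, b, c] <:+: l ∧ E a b ∧ E c b

/-- An acyclic undirected path: consecutive nodes joined by an edge in some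
direction, no repeated nodes. -/
def UPath (E : V → V → Prop) (l : List V) : Prop :=
  l.Chain' (fun a b => E a b ∨ E b a) ∧ l.Nodup

/-- An acyclic undirected path from `u` to `v` (with at least one edge). -/
def UPathFrom (E : V → V → Prop) (u v : V) (l : List V) : Prop :=
  UPath E l ∧ l.head? = some u ∧ l.getLast? = some v ∧ 2 ≤ l.length

/-- A directed walk from `u` to `v` (nodes may repeat). -/
def DirWalkFrom (E : V → V → Prop) (u v : V) (l : List V) : Prop :=
  l.Chain' E ∧ l.head? = some u ∧ l.getLast? = some v

/-- An acyclic directed path from `u` to `v`. -/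
def DirPathFrom (E : V → V → Prop) (u v : V) (l : List V) : Prop :=
  l.Chain' E ∧ l.Nodup ∧ l.head? = some u ∧ l.getLast? = some v

/-- `d` is a descendant of `b` (every node is its own descendant). -/
def Descendant (E : V → V → Prop) (b d : V) : Prop := Relation.ReflTransGen E b d

/-- The path `l` is d-connected given `Z`: no mediator or confounder on `l` is
in `Z`, and every collider on `l` has a descendant in `Z`. -/
def DConnPath (E : V → V → Prop) (Z : Set V) (l : List V) : Prop :=
  (∀ b, Mediator E l b → b ∉ Z) ∧
  (∀ b, Confounder E l b → b ∉ Z) ∧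
  (∀ b, Collider E l b → ∃ d ∈ Z, Descendant E b d)

/-- `u` and `v` are d-connected given `Z`. -/
def DConnected (E : V → V → Prop) (Z : Set V) (u v : V) : Prop :=
  ∃ l, UPathFrom E u v l ∧ DConnPath E Z l

/-- `u` and `v` are d-separated given `Z`: every acyclic undirected path from
`u` to `v` is blocked. -/
def DSeparated (E : V → V → Prop) (Z : Set V) (u v : V) : Prop :=
  ∀ l, UPathFrom E u v l →
    (∃ b ∈ Z, Mediator E l b ∨ Confounder E l b) ∨
    (∃ b, Collider E l b ∧ ¬ ∃ d ∈ Z, Descendant E b d)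

/-- `w` is an unblocked ancestor of `u` given `Z`: `w = u`, or there is a
directed path from `w` to `u` on which neither `w` nor any internal node
lies in `Z`. -/
def UnblockedAnc (E : V → V → Prop) (Z : Set V) (w u : V) : Prop :=
  w = u ∨ ∃ l : List V, l.Chain' E ∧ l.head? = some w ∧ l.getLast? = some u ∧
    ∀ x ∈ l.dropLast, x ∉ Z

/-- `x` is a source on the path `l`: an endpoint whose adjacent path edge
points away from it, or an (internal) confounder. -/
def SourceOn (E : V → V → Prop) (l : List V) (x : V) : Prop :=
  (∃ b, [x, b] <+: l ∧ E x b) ∨ (∃ b, [b, x] <:+ l ∧ E x b) ∨ Confounder E l x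

end CausalDefs

/-! Both prefixes are directed paths ending at `x`, so their last edges point into `x`;
the glued path has no repeated node since the prefixes are disjoint and `x` lies on neither. -/

namespace List

variable {α : Type*} {R : α → α → Prop} {l₁ l₂ : List α} {x : α}

theorem IsChain.append_singleton_append_reverse (h₁ : (l₁ ++ [x]).IsChain R)
    (h₂ : (l₂ ++ [x]).IsChain R) :
    (l₁ ++ [x] ++ l₂.reverse).IsChain (fun a b => R a b ∨ R b a) := by
  have h₂' : ([x] ++ l₂.reverse).IsChain (fun a b => R a b ∨ R b a) := by
    rw [show [x] ++ l₂.reverse = (l₂ ++ [x]).reverse by simp, isChain_reverse]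
    exact h₂.imp fun _ _ h => Or.inr h
  exact (h₁.imp fun _ _ h => Or.inl h).append_overlap h₂' (cons_ne_nil x [])

theorem Nodup.append_singleton_append_reverse (h₁ : (l₁ ++ [x]).Nodup)
    (h₂ : (l₂ ++ [x]).Nodup) (hdisj : l₁.Disjoint l₂) :
    (l₁ ++ [x] ++ l₂.reverse).Nodup := by
  rw [nodup_append, nodup_reverse]
  refine ⟨h₁, h₂.sublist (sublist_append_left _ _), fun y hy z hz hyz => ?_⟩
  subst hyz
  rw [mem_reverse] at hz
  rcases mem_append.mp hy with hy | hy
  · exact hdisj hy hz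
  · obtain rfl := mem_singleton.mp hy
    exact (nodup_append.mp h₂).2.2 y hz y (mem_singleton_self y) rfl

theorem getLast_triple_infix_append_reverse (h₁ : l₁ ≠ []) (h₂ : l₂ ≠ []) :
    [l₁.getLast h₁, x, l₂.getLast h₂] <:+: l₁ ++ [x] ++ l₂.reverse := by
  refine ⟨l₁.dropLast, l₂.dropLast.reverse, ?_⟩
  conv_rhs => rw [← dropLast_append_getLast h₁, ← dropLast_append_getLast h₂]
  simp

end List

section

variable {V : Type} {E : V → V → Prop}

theorem DirPathFrom.prefix_ending_at {u v x : V} {a b : List V}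
    (h : DirPathFrom E u v (a ++ [x] ++ b)) : DirPathFrom E u x (a ++ [x]) := by
  obtain ⟨hchain, hnodup, hhead, -⟩ := h
  refine ⟨hchain.prefix (List.prefix_append _ _), hnodup.sublist (List.sublist_append_left _ _),
    ?_, List.getLast?_concat⟩
  rwa [List.head?_append_of_ne_nil _ (by simp)] at hhead

variable {u₁ u₂ x : V} {a₁ a₂ : List V}

theorem DirPathFrom.upathFrom_append_singleton_append_reverse
    (h₁ : DirPathFrom E u₁ x (a₁ ++ [x])) (h₂ : DirPathFrom E u₂ x (a₂ ++ [x]))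
    (hdisj : a₁.Disjoint a₂) (ha₁ : a₁ ≠ []) :
    UPathFrom E u₁ u₂ (a₁ ++ [x] ++ a₂.reverse) := by
  refine ⟨⟨h₁.1.append_singleton_append_reverse h₂.1,
    h₁.2.1.append_singleton_append_reverse h₂.2.1 hdisj⟩, ?_, ?_, ?_⟩
  · rw [List.head?_append_of_ne_nil _ (by simp)]
    exact h₁.2.2.1
  · rw [List.append_assoc, show [x] ++ a₂.reverse = (a₂ ++ [x]).reverse by simp,
      List.getLast?_append_of_ne_nil _ (by simp), List.getLast?_reverse]
    exact h₂.2.2.1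
  · have := List.length_pos_iff.mpr ha₁
    simp only [List.length_append, List.length_singleton, List.length_reverse]
    omega

theorem collider_append_singleton_append_reverse (h₁ : (a₁ ++ [x]).IsChain E)
    (h₂ : (a₂ ++ [x]).IsChain E) (ha₁ : a₁ ≠ []) (ha₂ : a₂ ≠ []) :
    Collider E (a₁ ++ [x] ++ a₂.reverse) x :=
  ⟨_, _, List.getLast_triple_infix_append_reverse ha₁ ha₂,
    h₁.rel_getLast_head_of_append ha₁ (List.cons_ne_nil x []),
    h₂.rel_getLast_head_of_append ha₂ (List.cons_ne_nil x [])⟩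

end

theorem directed_paths_intersect_at_collider_general {V : Type}
    (E : V → V → Prop)
    (u1 v1 u2 v2 x : V) (a1 b1 a2 b2 : List V)
    (h1 : DirPathFrom E u1 v1 (a1 ++ [x] ++ b1))
    (h2 : DirPathFrom E u2 v2 (a2 ++ [x] ++ b2))
    (hdisj : ∀ y ∈ a1, y ∉ a2)
    (ha1 : a1 ≠ []) (ha2 : a2 ≠ []) :
    UPath E (a1 ++ [x] ++ a2.reverse) ∧
    UPathFrom E u1 u2 (a1 ++ [x] ++ a2.reverse) ∧
    Collider E (a1 ++ [x] ++ a2.reverse) x := by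
  have hp1 := h1.prefix_ending_at
  have hp2 := h2.prefix_ending_at
  have hpath := hp1.upathFrom_append_singleton_append_reverse hp2
    (fun y hy₁ hy₂ => hdisj y hy₁ hy₂) ha1
  exact ⟨hpath.1, hpath, collider_append_singleton_append_reverse hp1.1 hp2.1 ha1 ha2⟩

/-- Two acyclic directed paths intersecting first at `x` (disjoint prefixes)
yield, by following the first path to `x` and the reverse of the second path
back, an acyclic path on which `x` is a collider. -/
theorem directed_paths_intersect_at_collider {V : Type} [Fintype V]
    (E : V → V → Prop) (hacyc : AcyclicRel E)
    (u1 v1 u2 v2 x : V) (a1 b1 a2 b2 : List V)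
    (h1 : DirPathFrom E u1 v1 (a1 ++ [x] ++ b1))
    (h2 : DirPathFrom E u2 v2 (a2 ++ [x] ++ b2))
    (hdisj : ∀ y ∈ a1, y ∉ a2)
    (ha1 : a1 ≠ []) (ha2 : a2 ≠ []) :
    UPath E (a1 ++ [x] ++ a2.reverse) ∧
    UPathFrom E u1 u2 (a1 ++ [x] ++ a2.reverse) ∧
    Collider E (a1 ++ [x] ++ a2.reverse) x :=
  directed_paths_intersect_at_collider_general E u1 v1 u2 v2 x a1 b1 a2 b2 h1 h2 hdisj ha1 ha2
end

section
/- Let P1 be a d-connected path from u to m and P2 a d-connected path from m to v (both given conditioning set Z), sharing no node other than m. Then the concatenated path from u to v through m is d-connected given Z, provided that m, in the concatenated path, is either (1) a mediator not in Z, (2) a confounder not in Z, or (3) a collider with a descendant in Z. -/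
/-!
Since the two paths meet only in `m`, the concatenation is again a path, and every triple of
consecutive nodes on it lies on the first path, on the second, or is centred at `m`. The first two
kinds of triple are handled by the d-connection of the pieces. On a path the neighbours of `m` are
unique, and an acyclic graph has no 2-cycles, so `m` plays exactly one of the three roles: the one
the hypothesis on `m` controls.
-/

namespace List

variable {α : Type*} {l l₁ l₂ : List α} {a b c a' c' m : α}

theorem Nodup.eq_of_infix_triple (hl : l.Nodup) (h : [a, b, c] <:+: l)
    (h' : [a', b, c'] <:+: l) : a = a' ∧ c = c' := by
  obtain ⟨k, hk, hget⟩ := infix_iff_getElem?.1 h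
  obtain ⟨k', -, hget'⟩ := infix_iff_getElem?.1 h'
  have hb : l[1 + k]? = l[1 + k']? := by rw [hget 1 (by simp), hget' 1 (by simp)]; rfl
  obtain rfl : k = k' := by
    have := (getElem?_inj (by simp at hk; omega) hl).1 hb
    omega
  constructor
  · simpa using (hget 0 (by simp)).symm.trans (hget' 0 (by simp))
  · simpa using (hget 2 (by simp)).symm.trans (hget' 2 (by simp))

theorem triple_infix_append_singleton_append (h : [a, b, c] <:+: l₁ ++ [m] ++ l₂) :
    [a, b, c] <:+: l₁ ++ [m] ∨ [a, b, c] <:+: m :: l₂ ∨ b = m := by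
  rcases infix_append_iff.1 h with h | h | ⟨s, t, hst, hs, ht⟩
  · exact Or.inl h
  · exact Or.inr (Or.inl (h.trans (suffix_cons m l₂).isInfix))
  · -- `s` is the part of the triple lying in `l₁ ++ [m]`, `t` the part lying in `l₂`
    rcases s with _ | ⟨x, _ | ⟨y, _ | ⟨z, _ | ⟨w, s⟩⟩⟩⟩ <;>
      simp only [nil_append, cons_append, cons.injEq] at hst
    · subst hst
      exact Or.inr (Or.inl (ht.isInfix.trans (suffix_cons m l₂).isInfix))
    · obtain ⟨rfl, rfl⟩ := hst
      obtain rfl : a = m := by simpa using hs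
      exact Or.inr (Or.inl ((prefix_cons_inj a).2 ht).isInfix)
    · obtain ⟨rfl, rfl, -⟩ := hst
      exact Or.inr (Or.inr (by simpa using hs.getLast (cons_ne_nil a [b])))
    · obtain ⟨rfl, rfl, rfl, -⟩ := hst
      exact Or.inl hs.isInfix
    · simp at hst

theorem exists_triple_infix_append_singleton_append {P : α → α → Prop}
    (h : ∃ a c, [a, b, c] <:+: l₁ ++ [m] ++ l₂ ∧ P a c) :
    (∃ a c, [a, b, c] <:+: l₁ ++ [m] ∧ P a c) ∨
      (∃ a c, [a, b, c] <:+: m :: l₂ ∧ P a c) ∨ b = m := by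
  obtain ⟨a, c, hin, hP⟩ := h
  rcases triple_infix_append_singleton_append hin with h | h | h
  exacts [Or.inl ⟨a, c, h, hP⟩, Or.inr (Or.inl ⟨a, c, h, hP⟩), Or.inr (Or.inr h)]

end List

section Concatenation

variable {V : Type} {E : V → V → Prop} {Z : Set V} {l l₁ l₂ : List V} {u m v b : V}

theorem AcyclicRel.asymm (h : AcyclicRel E) : ∀ ⦃x y⦄, E x y → ¬E y x :=
  fun x _ hxy hyx => h x ((Relation.TransGen.single hxy).tail hyx)

theorem Collider.not_mediator (hE : ∀ ⦃x y⦄, E x y → ¬E y x) (hl : l.Nodup)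
    (hc : Collider E l b) : ¬Mediator E l b := by
  obtain ⟨a, c, hin, hab, hcb⟩ := hc
  rintro ⟨a', c', hin', hedge⟩
  obtain ⟨rfl, rfl⟩ := hl.eq_of_infix_triple hin hin'
  rcases hedge with ⟨-, hbc⟩ | ⟨hba, -⟩
  · exact hE hbc hcb
  · exact hE hba hab

theorem Collider.not_confounder (hE : ∀ ⦃x y⦄, E x y → ¬E y x) (hl : l.Nodup)
    (hc : Collider E l b) : ¬Confounder E l b := by
  obtain ⟨a, c, hin, hab, -⟩ := hc
  rintro ⟨a', c', hin', hba, -⟩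
  obtain ⟨rfl, rfl⟩ := hl.eq_of_infix_triple hin hin'
  exact hE hba hab

theorem Mediator.of_append_singleton_append (h : Mediator E (l₁ ++ [m] ++ l₂) b) :
    Mediator E (l₁ ++ [m]) b ∨ Mediator E (m :: l₂) b ∨ b = m :=
  List.exists_triple_infix_append_singleton_append h

theorem Confounder.of_append_singleton_append (h : Confounder E (l₁ ++ [m] ++ l₂) b) :
    Confounder E (l₁ ++ [m]) b ∨ Confounder E (m :: l₂) b ∨ b = m :=
  List.exists_triple_infix_append_singleton_append h

theorem Collider.of_append_singleton_append (h : Collider E (l₁ ++ [m] ++ l₂) b) :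
    Collider E (l₁ ++ [m]) b ∨ Collider E (m :: l₂) b ∨ b = m :=
  List.exists_triple_infix_append_singleton_append h

theorem UPathFrom.append (h₁ : UPathFrom E u m (l₁ ++ [m])) (h₂ : UPathFrom E m v (m :: l₂))
    (hdisj : ∀ x ∈ l₁, x ∉ l₂) : UPathFrom E u v (l₁ ++ [m] ++ l₂) := by
  obtain ⟨⟨hc₁, hn₁⟩, hu, -, hlen₁⟩ := h₁
  obtain ⟨⟨hc₂, hn₂⟩, -, hv, hlen₂⟩ := h₂
  have hl₂ : l₂ ≠ [] := by rintro rfl; simp at hlen₂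
  refine ⟨⟨hc₁.append_overlap hc₂ (List.cons_ne_nil m []), ?_⟩, ?_, ?_, ?_⟩
  · refine List.nodup_append.2 ⟨hn₁, hn₂.of_cons, fun x hx y hy hxy => ?_⟩
    subst hxy
    rcases List.mem_append.1 hx with hx | hx
    · exact hdisj x hx hy
    · rw [List.mem_singleton.1 hx] at hy
      exact (List.nodup_cons.1 hn₂).1 hy
  · rwa [List.head?_append_of_ne_nil _ (by simp)]
  · simpa [List.getLast?_append, hl₂] using hv
  · simp only [List.length_append, List.length_cons, List.length_nil] at hlen₁ hlen₂ ⊢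
    omega

theorem DConnPath.append (hE : ∀ ⦃x y⦄, E x y → ¬E y x) (hl : (l₁ ++ [m] ++ l₂).Nodup)
    (hd₁ : DConnPath E Z (l₁ ++ [m])) (hd₂ : DConnPath E Z (m :: l₂))
    (hm : (Mediator E (l₁ ++ [m] ++ l₂) m ∧ m ∉ Z) ∨
          (Confounder E (l₁ ++ [m] ++ l₂) m ∧ m ∉ Z) ∨
          (Collider E (l₁ ++ [m] ++ l₂) m ∧ ∃ d ∈ Z, Descendant E m d)) :
    DConnPath E Z (l₁ ++ [m] ++ l₂) := by
  refine ⟨fun b hb => ?_, fun b hb => ?_, fun b hb => ?_⟩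
  · rcases hb.of_append_singleton_append with h | h | rfl
    · exact hd₁.1 b h
    · exact hd₂.1 b h
    · rcases hm with ⟨-, hZ⟩ | ⟨-, hZ⟩ | ⟨hc, -⟩
      exacts [hZ, hZ, absurd hb (hc.not_mediator hE hl)]
  · rcases hb.of_append_singleton_append with h | h | rfl
    · exact hd₁.2.1 b h
    · exact hd₂.2.1 b h
    · rcases hm with ⟨-, hZ⟩ | ⟨-, hZ⟩ | ⟨hc, -⟩
      exacts [hZ, hZ, absurd hb (hc.not_confounder hE hl)]
  · rcases hb.of_append_singleton_append with h | h | rfl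
    · exact hd₁.2.2 b h
    · exact hd₂.2.2 b h
    · rcases hm with ⟨hmed, -⟩ | ⟨hconf, -⟩ | ⟨-, hdesc⟩
      exacts [absurd hmed (hb.not_mediator hE hl), absurd hconf (hb.not_confounder hE hl), hdesc]

end Concatenation

theorem concat_dConnected_general {V : Type} (E : V → V → Prop)
    (hacyc : AcyclicRel E) (Z : Set V) (u m v : V) (q1 q2 : List V)
    (h1 : UPathFrom E u m (q1 ++ [m])) (hd1 : DConnPath E Z (q1 ++ [m]))
    (h2 : UPathFrom E m v (m :: q2)) (hd2 : DConnPath E Z (m :: q2))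
    (hdisj : ∀ x ∈ q1, x ∉ q2)
    (hm : (Mediator E (q1 ++ [m] ++ q2) m ∧ m ∉ Z) ∨
          (Confounder E (q1 ++ [m] ++ q2) m ∧ m ∉ Z) ∨
          (Collider E (q1 ++ [m] ++ q2) m ∧ ∃ d ∈ Z, Descendant E m d)) :
    UPathFrom E u v (q1 ++ [m] ++ q2) ∧ DConnPath E Z (q1 ++ [m] ++ q2) := by
  have hpath := h1.append h2 hdisj
  exact ⟨hpath, hd1.append hacyc.asymm hpath.1.2 hd2 hm⟩

/-- Concatenating two d-connected paths sharing only the node `m` yields a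
d-connected path, provided `m` is a mediator or confounder not in `Z`, or a
collider with a descendant in `Z`, in the concatenated path. -/
theorem concat_dConnected {V : Type} [Fintype V] (E : V → V → Prop)
    (hacyc : AcyclicRel E) (Z : Set V) (u m v : V) (q1 q2 : List V)
    (h1 : UPathFrom E u m (q1 ++ [m])) (hd1 : DConnPath E Z (q1 ++ [m]))
    (h2 : UPathFrom E m v (m :: q2)) (hd2 : DConnPath E Z (m :: q2))
    (hdisj : ∀ x ∈ q1, x ∉ q2)
    (hm : (Mediator E (q1 ++ [m] ++ q2) m ∧ m ∉ Z) ∨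
          (Confounder E (q1 ++ [m] ++ q2) m ∧ m ∉ Z) ∨
          (Collider E (q1 ++ [m] ++ q2) m ∧ ∃ d ∈ Z, Descendant E m d)) :
    UPathFrom E u v (q1 ++ [m] ++ q2) ∧ DConnPath E Z (q1 ++ [m] ++ q2) :=
  concat_dConnected_general E hacyc Z u m v q1 q2 h1 hd1 h2 hd2 hdisj hm
end

section
/- In a DAG G with conditioning set Z, define w to be an unblocked ancestor of u if w = u, or there is a directed path from w to u such that neither w nor any internal node of the path lies in Z. If two distinct nodes w1 and w2 (with w1, w2 ∉ Z) share an unblocked ancestor a, then w1 and w2 are d-connected given Z; specifically, either there is an acyclic directed path from w1 to w2 avoiding Z internally, or one from w2 to w1 avoiding Z internally, or there is an acyclic path consisting of two directed paths from a common node a' ∉ Z to w1 and to w2 whose internal nodes avoid Z. -/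
/-! Let `a'` be the last node of a directed path from `a` to `w1` that also lies on a directed path
from `a` to `w2`. The two paths below `a'` are disjoint, so following the first one backwards from
`w1` up to `a'` and then the second one down to `w2` gives an acyclic path. Every interior node of
that path has an outgoing path edge, so by acyclicity there are no colliders, and all its nodes
avoid `Z`; hence it d-connects `w1` and `w2`. It is a directed path when `a'` is `w1` or `w2`. -/

namespace List

variable {α : Type*}

theorem exists_cons_suffix_of_exists (P : α → Prop) :
    ∀ {l : List α}, (∃ x ∈ l, P x) → ∃ a s, a :: s <:+ l ∧ P a ∧ ∀ x ∈ s, ¬ P x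
  | [], h => by simp at h
  | y :: l, h => by
    by_cases hl : ∃ x ∈ l, P x
    · obtain ⟨a, s, hs, ha, hnot⟩ := exists_cons_suffix_of_exists P hl
      exact ⟨a, s, hs.trans (suffix_cons y l), ha, hnot⟩
    · push Not at hl
      obtain ⟨x, hx, hPx⟩ := h
      obtain rfl | hx := mem_cons.1 hx
      · exact ⟨x, l, suffix_refl _, hPx, hl⟩
      · exact absurd hPx (hl x hx)

theorem reverse_cons_append_perm (a : α) (l₁ l₂ : List α) :
    (a :: l₁).reverse ++ l₂ ~ a :: (l₁ ++ l₂) :=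
  (reverse_perm _).append_right l₂

theorem IsSuffix.getLast?_eq {l₁ l₂ : List α} (h : l₁ <:+ l₂) (hne : l₁ ≠ []) :
    l₂.getLast? = l₁.getLast? := by
  obtain ⟨u, rfl⟩ := h
  exact getLast?_append_of_ne_nil u hne

theorem rel_or_rel_of_infix_append {R : α → α → Prop} :
    ∀ {p q : List α}, p.IsChain (flip R) → q.IsChain R →
      ∀ {x b c : α}, [x, b, c] <:+: p ++ q → R b x ∨ R b c
  | [], q, _, hq, x, b, c, h => by
    have hbc := hq.infix h
    simp only [isChain_cons_cons] at hbc
    exact Or.inr hbc.2.1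
  | y :: p, q, hp, hq, x, b, c, h => by
    rcases infix_cons_iff.1 h with h | h
    · obtain ⟨rfl, hbc⟩ : x = y ∧ [b, c] <+: p ++ q := by simpa using h
      cases p with
      | nil =>
        have := hq.prefix hbc
        simp only [isChain_cons_cons] at this
        exact Or.inr this.1
      | cons z p =>
        obtain ⟨rfl, -⟩ : b = z ∧ [c] <+: p ++ q := by simpa using hbc
        exact Or.inl (isChain_cons_cons.1 hp).1
    · exact rel_or_rel_of_infix_append hp.tail hq h

end List

open List

section CausalPaths

variable {V : Type} {E : V → V → Prop} {Z : Set V}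

theorem Mediator.mem {l : List V} {b : V} (h : Mediator E l b) : b ∈ l := by
  obtain ⟨a, c, hinf, -⟩ := h
  exact hinf.subset (by simp)

theorem Confounder.mem {l : List V} {b : V} (h : Confounder E l b) : b ∈ l := by
  obtain ⟨a, c, hinf, -⟩ := h
  exact hinf.subset (by simp)

theorem AcyclicRel.nodup_of_isChain (hacyc : AcyclicRel E) {l : List V} (hl : l.IsChain E) :
    l.Nodup := by
  refine (hl.imp fun _ _ => Relation.TransGen.single).pairwise.imp ?_
  rintro x _ hxy rfl
  exact hacyc x hxy

theorem AcyclicRel.not_collider_append (hacyc : AcyclicRel E) {p q : List V}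
    (hp : p.IsChain (flip E)) (hq : q.IsChain E) (b : V) : ¬ Collider E (p ++ q) b := by
  rintro ⟨x, c, hinf, hxb, hcb⟩
  rcases rel_or_rel_of_infix_append hp hq hinf with hbx | hbc
  · exact hacyc b (.head hbx (.single hxb))
  · exact hacyc b (.head hbc (.single hcb))

theorem UnblockedAnc.exists_isChain {a w : V} (h : UnblockedAnc E Z a w) (hw : w ∉ Z) :
    ∃ l, (a :: l).IsChain E ∧ (a :: l).getLast? = some w ∧ ∀ x ∈ a :: l, x ∉ Z := by
  rcases h with rfl | ⟨l, hc, hh, hl, hZ⟩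
  · exact ⟨[], isChain_singleton a, rfl, by simpa using hw⟩
  obtain ⟨l, rfl⟩ : ∃ l', l = a :: l' := by
    cases l with
    | nil => simp at hh
    | cons b l => exact ⟨l, by simpa using hh⟩
  refine ⟨l, hc, hl, fun x hx => ?_⟩
  rw [← dropLast_append_getLast? w hl, mem_append, mem_singleton] at hx
  rcases hx with hx | rfl
  exacts [hZ x hx, hw]

end CausalPaths

/-- Read as the undirected path `(top :: left).reverse ++ right` from `w1` up to `top` and down
to `w2`. -/
structure UnblockedTrek {V : Type} (E : V → V → Prop) (Z : Set V) (top w1 w2 : V)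
    (left right : List V) : Prop where
  isChain_left : (top :: left).IsChain E
  isChain_right : (top :: right).IsChain E
  getLast?_left : (top :: left).getLast? = some w1
  getLast?_right : (top :: right).getLast? = some w2
  nodup : (top :: (left ++ right)).Nodup
  not_mem : ∀ x ∈ top :: (left ++ right), x ∉ Z

namespace UnblockedTrek

variable {V : Type} {E : V → V → Prop} {Z : Set V} {a w1 w2 : V} {t1 t2 : List V}

theorem symm (h : UnblockedTrek E Z a w1 w2 t1 t2) : UnblockedTrek E Z a w2 w1 t2 t1 where
  isChain_left := h.isChain_right
  isChain_right := h.isChain_left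
  getLast?_left := h.getLast?_right
  getLast?_right := h.getLast?_left
  nodup := (perm_append_comm.cons a).nodup_iff.1 h.nodup
  not_mem x hx := h.not_mem x ((perm_append_comm.cons a).subset hx)

theorem dirPathFrom_left (h : UnblockedTrek E Z a w1 w2 t1 t2) : DirPathFrom E a w1 (a :: t1) :=
  ⟨h.isChain_left, h.nodup.sublist (by simp), rfl, h.getLast?_left⟩

theorem upathFrom (h : UnblockedTrek E Z a w1 w2 t1 t2) (hne : w1 ≠ w2) :
    UPathFrom E w1 w2 ((a :: t1).reverse ++ t2) := by
  have hsplit : (a :: t1).reverse ++ t2 = t1.reverse ++ [a] ++ t2 := by simp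
  refine ⟨⟨?_, (reverse_cons_append_perm a t1 t2).nodup_iff.2 h.nodup⟩, ?_, ?_, ?_⟩
  · rw [hsplit]
    refine IsChain.append_overlap ?_ ?_ (cons_ne_nil a [])
    · have hup : (a :: t1).reverse.IsChain fun x y => E x y ∨ E y x :=
        (isChain_reverse.2 h.isChain_left).imp fun _ _ => Or.inr
      rwa [reverse_cons] at hup
    · exact h.isChain_right.imp fun _ _ => Or.inl
  · rw [head?_append_of_ne_nil _ (by simp), head?_reverse, h.getLast?_left]
  · rw [hsplit, append_assoc, singleton_append, getLast?_append_of_ne_nil _ (cons_ne_nil a t2),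
      h.getLast?_right]
  · rw [(reverse_cons_append_perm a t1 t2).length_eq, length_cons, length_append]
    by_contra! hlen
    obtain ⟨rfl, rfl⟩ : t1 = [] ∧ t2 = [] := by
      constructor <;> exact length_eq_zero_iff.1 (by omega)
    exact hne (Option.some_injective _ (h.getLast?_left.symm.trans h.getLast?_right))

theorem dConnPath (h : UnblockedTrek E Z a w1 w2 t1 t2) (hacyc : AcyclicRel E) :
    DConnPath E Z ((a :: t1).reverse ++ t2) := by
  have hZ : ∀ x ∈ (a :: t1).reverse ++ t2, x ∉ Z := fun x hx =>
    h.not_mem x ((reverse_cons_append_perm a t1 t2).subset hx)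
  refine ⟨fun b hb => hZ b hb.mem, fun b hb => hZ b hb.mem, fun b hb => ?_⟩
  exact absurd hb (hacyc.not_collider_append (isChain_reverse.2 h.isChain_left)
    h.isChain_right.tail b)

theorem dConnected (h : UnblockedTrek E Z a w1 w2 t1 t2) (hacyc : AcyclicRel E)
    (hne : w1 ≠ w2) : DConnected E Z w1 w2 :=
  ⟨_, h.upathFrom hne, h.dConnPath hacyc⟩

theorem exists_dirPathFrom_of_left_eq_nil (h : UnblockedTrek E Z a w1 w2 t1 t2) (h1 : t1 = []) :
    ∃ l, DirPathFrom E w1 w2 l ∧ ∀ x ∈ l.tail.dropLast, x ∉ Z := by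
  obtain rfl : a = w1 := by simpa [h1] using h.getLast?_left
  refine ⟨a :: t2, h.symm.dirPathFrom_left, fun x hx => h.not_mem x ?_⟩
  simp only [h1, nil_append]
  exact mem_cons_of_mem a (dropLast_subset t2 hx)

theorem exists_fork (h : UnblockedTrek E Z a w1 w2 t1 t2) (h1 : t1 ≠ []) (h2 : t2 ≠ []) :
    ∃ m1 m2 : List V, a ∉ Z ∧
      DirPathFrom E a w1 (a :: (m1 ++ [w1])) ∧ DirPathFrom E a w2 (a :: (m2 ++ [w2])) ∧
      (∀ x ∈ m1, x ∉ Z) ∧ (∀ x ∈ m2, x ∉ Z) ∧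
      ((w1 :: m1.reverse) ++ a :: (m2 ++ [w2])).Nodup := by
  obtain ⟨m1, v1, rfl⟩ := (eq_nil_or_concat' t1).resolve_left h1
  obtain ⟨m2, v2, rfl⟩ := (eq_nil_or_concat' t2).resolve_left h2
  obtain rfl : v1 = w1 := by
    simpa only [← cons_append, getLast?_concat, Option.some_inj] using h.getLast?_left
  obtain rfl : v2 = w2 := by
    simpa only [← cons_append, getLast?_concat, Option.some_inj] using h.getLast?_right
  refine ⟨m1, m2, h.not_mem a (mem_cons_self ..), h.dirPathFrom_left, h.symm.dirPathFrom_left,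
    fun x hx => h.not_mem x (by simp [hx]), fun x hx => h.not_mem x (by simp [hx]), ?_⟩
  simpa using (reverse_cons_append_perm a _ _).nodup_iff.2 h.nodup

end UnblockedTrek

theorem exists_unblockedTrek {V : Type} {E : V → V → Prop} {Z : Set V} {w1 w2 a : V}
    (hacyc : AcyclicRel E) (hw1 : w1 ∉ Z) (hw2 : w2 ∉ Z)
    (ha1 : UnblockedAnc E Z a w1) (ha2 : UnblockedAnc E Z a w2) :
    ∃ a' t1 t2, UnblockedTrek E Z a' w1 w2 t1 t2 := by
  obtain ⟨l1, hc1, hl1, hZ1⟩ := ha1.exists_isChain hw1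
  obtain ⟨l2, hc2, hl2, hZ2⟩ := ha2.exists_isChain hw2
  obtain ⟨a', t1, hsuf1, ha', hdisj⟩ :=
    exists_cons_suffix_of_exists (· ∈ a :: l2) ⟨a, mem_cons_self .., mem_cons_self ..⟩
  obtain ⟨s, t2, hs⟩ := append_of_mem ha'
  have hsuf2 : a' :: t2 <:+ a :: l2 := ⟨s, hs.symm⟩
  have hnd1 := hacyc.nodup_of_isChain (hc1.suffix hsuf1)
  have hnd2 := hacyc.nodup_of_isChain (hc2.suffix hsuf2)
  refine ⟨a', t1, t2, hc1.suffix hsuf1, hc2.suffix hsuf2, ?_, ?_, ?_, ?_⟩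
  · rwa [← hsuf1.getLast?_eq (cons_ne_nil _ _)]
  · rwa [← hsuf2.getLast?_eq (cons_ne_nil _ _)]
  · refine nodup_cons.2 ⟨?_, nodup_append.2 ⟨hnd1.of_cons, hnd2.of_cons, ?_⟩⟩
    · simpa [not_or] using ⟨(nodup_cons.1 hnd1).1, (nodup_cons.1 hnd2).1⟩
    · rintro x hx _ hy rfl
      exact hdisj x hx (hsuf2.subset (mem_cons_of_mem a' hy))
  · intro x hx
    rcases mem_cons.1 hx with rfl | hx
    · exact hZ1 x (hsuf1.subset (mem_cons_self ..))
    rcases mem_append.1 hx with hx | hx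
    · exact hZ1 x (hsuf1.subset (mem_cons_of_mem a' hx))
    · exact hZ2 x (hsuf2.subset (mem_cons_of_mem a' hx))

theorem shared_unblocked_ancestor_dConnected_general {V : Type}
    (E : V → V → Prop) (hacyc : AcyclicRel E) (Z : Set V)
    (w1 w2 a : V) (hne : w1 ≠ w2) (hw1 : w1 ∉ Z) (hw2 : w2 ∉ Z)
    (ha1 : UnblockedAnc E Z a w1) (ha2 : UnblockedAnc E Z a w2) :
    DConnected E Z w1 w2 ∧
    ((∃ l, DirPathFrom E w1 w2 l ∧ ∀ x ∈ l.tail.dropLast, x ∉ Z) ∨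
     (∃ l, DirPathFrom E w2 w1 l ∧ ∀ x ∈ l.tail.dropLast, x ∉ Z) ∨
     (∃ (a' : V) (m1 m2 : List V), a' ∉ Z ∧
        DirPathFrom E a' w1 (a' :: (m1 ++ [w1])) ∧
        DirPathFrom E a' w2 (a' :: (m2 ++ [w2])) ∧
        (∀ x ∈ m1, x ∉ Z) ∧ (∀ x ∈ m2, x ∉ Z) ∧
        ((w1 :: m1.reverse) ++ a' :: (m2 ++ [w2])).Nodup)) := by
  obtain ⟨a', t1, t2, hT⟩ := exists_unblockedTrek hacyc hw1 hw2 ha1 ha2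
  refine ⟨hT.dConnected hacyc hne, ?_⟩
  by_cases h1 : t1 = []
  · exact Or.inl (hT.exists_dirPathFrom_of_left_eq_nil h1)
  by_cases h2 : t2 = []
  · exact Or.inr (Or.inl (hT.symm.exists_dirPathFrom_of_left_eq_nil h2))
  exact Or.inr (Or.inr ⟨a', hT.exists_fork h1 h2⟩)

/-- Two distinct nodes not in `Z` sharing an unblocked ancestor are
d-connected given `Z`, via a directed path one way or the other avoiding `Z`
internally, or via a single-confounder path. -/
theorem shared_unblocked_ancestor_dConnected {V : Type} [Fintype V]
    (E : V → V → Prop) (hacyc : AcyclicRel E) (Z : Set V)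
    (w1 w2 a : V) (hne : w1 ≠ w2) (hw1 : w1 ∉ Z) (hw2 : w2 ∉ Z)
    (ha1 : UnblockedAnc E Z a w1) (ha2 : UnblockedAnc E Z a w2) :
    DConnected E Z w1 w2 ∧
    ((∃ l, DirPathFrom E w1 w2 l ∧ ∀ x ∈ l.tail.dropLast, x ∉ Z) ∨
     (∃ l, DirPathFrom E w2 w1 l ∧ ∀ x ∈ l.tail.dropLast, x ∉ Z) ∨
     (∃ (a' : V) (m1 m2 : List V), a' ∉ Z ∧
        DirPathFrom E a' w1 (a' :: (m1 ++ [w1])) ∧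
        DirPathFrom E a' w2 (a' :: (m2 ++ [w2])) ∧
        (∀ x ∈ m1, x ∉ Z) ∧ (∀ x ∈ m2, x ∉ Z) ∧
        ((w1 :: m1.reverse) ++ a' :: (m2 ++ [w2])).Nodup)) :=
  shared_unblocked_ancestor_dConnected_general E hacyc Z w1 w2 a hne hw1 hw2 ha1 ha2
end

section
/- Let G be a DAG with a function f assigning each node a value computed from its parents' values and a per-node exogenous term, so that the value of each node is determined recursively (well-defined by acyclicity). Let Z ⊆ V and let U, U' be two exogenous-term assignments such that under both, every node z ∈ Z evaluates to a prescribed fixed value A_Z(z). If a node w evaluates differently under U than under U' (i.e., f_U(w) ≠ f_{U'}(w)), then there exists an unblocked ancestor a of w given Z (a = w, or a directed path from a to w with a ∉ Z and no internal node in Z) such that U(a) ≠ U'(a). -/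
/-! Induction along the parent relation, well-founded by acyclicity and finiteness. If the
exogenous terms at `w` agree, the values of some parent `p` differ; then `p ∉ Z`, since both
assignments fix the values on `Z`, so an unblocked ancestor of `p` extends along `p → w`. -/

section UnblockedAncestors

variable {V : Type} {E : V → V → Prop}

theorem AcyclicRel.wellFounded [Finite V] (h : AcyclicRel E) : WellFounded E := by
  have : IsTrans V (Relation.TransGen E) := ⟨fun _ _ _ => Relation.TransGen.trans⟩
  have : Std.Irrefl (Relation.TransGen E) := ⟨h⟩
  exact Subrelation.wf Relation.TransGen.single (Finite.wellFounded_of_trans_of_irrefl _)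

theorem UnblockedAnc.exists_walk {Z : Set V} {a u : V} (h : UnblockedAnc E Z a u) :
    ∃ l : List V, l.IsChain E ∧ l.head? = some a ∧ l.getLast? = some u ∧
      ∀ x ∈ l.dropLast, x ∉ Z := by
  rcases h with rfl | h
  · exact ⟨[a], List.isChain_singleton a, rfl, rfl, by simp⟩
  · exact h

theorem UnblockedAnc.tail {Z : Set V} {a p w : V} (h : UnblockedAnc E Z a p) (hpw : E p w)
    (hp : p ∉ Z) : UnblockedAnc E Z a w := by
  obtain ⟨l, hchain, hhead, hlast, hZ⟩ := h.exists_walk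
  obtain ⟨l, rfl⟩ := List.getLast?_eq_some_iff.mp hlast
  refine Or.inr ⟨l ++ [p] ++ [w], hchain.append (List.isChain_singleton w) (by simpa using hpw),
    ?_, by simp, ?_⟩
  · rwa [List.head?_append_of_ne_nil _ (by simp)]
  · intro x hx
    rw [List.dropLast_concat, List.mem_append, List.mem_singleton] at hx
    rcases hx with hx | rfl
    · exact hZ x (by simpa using hx)
    · exact hp

end UnblockedAncestors

theorem exists_mem_parents_eval_ne {V X : Type} {pa : V → List V} {g : V → X → List X → X}
    {f : (V → X) → V → X} (hf : ∀ (U : V → X) (w : V), f U w = g w (U w) ((pa w).map (f U)))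
    {U U' : V → X} {w : V} (hUw : U w = U' w) (hw : f U w ≠ f U' w) :
    ∃ p ∈ pa w, f U p ≠ f U' p := by
  by_contra! h
  exact hw (by rw [hf U w, hf U' w, hUw, List.map_congr_left h])

/-- If `w` evaluates differently under two exogenous assignments that both
properly condition on `Z`, then some unblocked ancestor of `w` given `Z` has a
differing exogenous term. -/
theorem value_affected_by_unblocked {V X : Type} [Fintype V]
    (pa : V → List V) (hacyc : AcyclicRel (fun a b => a ∈ pa b))
    (Z : Set V) (AZ : V → X)
    (g : V → X → List X → X) (f : (V → X) → V → X)
    (hf : ∀ (U : V → X) (w : V), f U w = g w (U w) ((pa w).map (f U)))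
    (U U' : V → X)
    (hU : ∀ z ∈ Z, f U z = AZ z) (hU' : ∀ z ∈ Z, f U' z = AZ z)
    (w : V) (hw : f U w ≠ f U' w) :
    ∃ a, UnblockedAnc (fun a b => a ∈ pa b) Z a w ∧ U a ≠ U' a := by
  induction w using hacyc.wellFounded.induction with
  | _ w IH =>
    by_cases hUw : U w = U' w
    · obtain ⟨p, hp, hfp⟩ := exists_mem_parents_eval_ne hf hUw hw
      have hpZ : p ∉ Z := fun hz => hfp ((hU p hz).trans (hU' p hz).symm)
      obtain ⟨a, ha, hUa⟩ := IH p hp hfp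
      exact ⟨a, ha.tail hp hpZ, hUa⟩
    · exact ⟨w, Or.inl rfl, hUw⟩
end

section
/- Let P be an acyclic undirected path from u to v in a DAG that is d-connected given Z, and let S1 be the set of 'source' nodes on P: nodes of P with no path-adjacent parent (i.e., both path edges adjacent to the node, or the single adjacent edge for an endpoint, point away from it). Then the first source node along P (in order from u) is an unblocked ancestor of u given Z. -/
theorem List.exists_infix_of_mem_tail_dropLast {α : Type*} :
    ∀ {l : List α} {x : α}, x ∈ l.tail.dropLast → ∃ a c, [a, x, c] <:+: l
  | a :: b :: c :: l, x, hx => by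
    rw [List.tail_cons, List.dropLast_cons_of_ne_nil (List.cons_ne_nil c l),
      List.mem_cons] at hx
    rcases hx with rfl | hx
    · exact ⟨a, c, (List.prefix_append [a, x, c] l).isInfix⟩
    · obtain ⟨a', c', h⟩ := List.exists_infix_of_mem_tail_dropLast (l := b :: c :: l) hx
      exact ⟨a', c', h.trans (List.suffix_cons a _).isInfix⟩

namespace CausalPath

variable {V : Type} {E : V → V → Prop} {L : List V}

theorem SourceOn.head_or_getLast_or_confounder {s : V} (hs : SourceOn E L s) :
    L.head? = some s ∨ L.getLast? = some s ∨ Confounder E L s := by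
  rcases hs with ⟨b, ⟨t, rfl⟩, -⟩ | ⟨b, ⟨t, rfl⟩, -⟩ | hc
  · exact Or.inl rfl
  · exact Or.inr (Or.inl (by simp))
  · exact Or.inr (Or.inr hc)

theorem rel_of_head_not_sourceOn {a b : V} (hab : [a, b] <+: L) (ha : ¬ SourceOn E L a)
    (hadj : E a b ∨ E b a) : E b a :=
  hadj.resolve_left fun h => ha (Or.inl ⟨b, hab, h⟩)

theorem rel_of_not_sourceOn {a b c : V} (habc : [a, b, c] <:+: L) (hba : E b a)
    (hb : ¬ SourceOn E L b) (hadj : E b c ∨ E c b) : E c b :=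
  hadj.resolve_left fun h => hb (Or.inr (Or.inr ⟨a, c, habc, hba, h⟩))

theorem isChain_flip_of_forall_not_sourceOn (hL : L.IsChain fun a b => E a b ∨ E b a)
    {l₁ l₂ : List V} {s : V} (hsplit : l₁ ++ s :: l₂ = L)
    (hl₁ : ∀ x ∈ l₁, ¬ SourceOn E L x) : (l₁ ++ [s]).IsChain (flip E) := by
  induction l₁ using List.reverseRecOn generalizing s l₂ with
  | nil => simp
  | append_singleton l₁ x ih =>
    have hx := hl₁ x (by simp)
    have hprev : (l₁ ++ [x]).IsChain (flip E) :=
      ih (by simpa using hsplit) fun y hy => hl₁ y (by simp [hy])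
    have hadj : E x s ∨ E s x := by
      have : [x, s].IsChain fun a b => E a b ∨ E b a := hL.infix ⟨l₁, l₂, by simpa using hsplit⟩
      simpa using this
    have hsx : E s x := by
      rcases l₁.eq_nil_or_concat with rfl | ⟨l₀, w, rfl⟩
      · exact rel_of_head_not_sourceOn ⟨l₂, by simpa using hsplit⟩ hx hadj
      · have hxw : E x w := by
          simpa [flip] using (List.isChain_append.mp hprev).2.2
        exact rel_of_not_sourceOn ⟨l₀, l₂, by simpa using hsplit⟩ hxw hx hadj
    exact List.isChain_append.mpr ⟨hprev, by simp, by simpa [flip] using hsx⟩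

theorem mediator_of_isChain_flip {l : List V} (hl : l.IsChain (flip E)) (hlL : l <:+: L)
    {x : V} (hx : x ∈ l.tail.dropLast) : Mediator E L x := by
  obtain ⟨a, c, habc⟩ := List.exists_infix_of_mem_tail_dropLast hx
  have hxac : E x a ∧ E c x := by
    simpa [List.isChain_cons_cons, flip] using hl.infix habc
  exact ⟨a, c, habc.trans hlL, Or.inr hxac⟩

end CausalPath

open CausalPath in
theorem first_source_is_unblocked_ancestor_general {V : Type}
    (E : V → V → Prop) (Z : Set V) (u v : V)
    (hu : u ∉ Z) (hv : v ∉ Z) (l1 l2 : List V) (s : V)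
    (hpath : UPathFrom E u v (l1 ++ s :: l2))
    (hconn : DConnPath E Z (l1 ++ s :: l2))
    (hs : SourceOn E (l1 ++ s :: l2) s)
    (hfirst : ∀ x ∈ l1, ¬ SourceOn E (l1 ++ s :: l2) x) :
    UnblockedAnc E Z s u := by
  obtain ⟨⟨hadj, -⟩, hhead, hlast, -⟩ := hpath
  obtain ⟨hmed, hconf, -⟩ := hconn
  have hsZ : s ∉ Z := by
    rcases hs.head_or_getLast_or_confounder with h | h | h
    · obtain rfl : s = u := Option.some_injective _ (h.symm.trans hhead)
      exact hu
    · obtain rfl : s = v := Option.some_injective _ (h.symm.trans hlast)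
      exact hv
    · exact hconf s h
  rcases l1 with _ | ⟨a, t⟩
  · exact Or.inl (by simpa using hhead)
  obtain rfl : a = u := by simpa using hhead
  have hback := isChain_flip_of_forall_not_sourceOn hadj rfl hfirst
  refine Or.inr ⟨(a :: t ++ [s]).reverse, List.isChain_reverse.mpr hback, by simp,
    by rw [List.getLast?_reverse]; rfl, ?_⟩
  intro x hx
  rw [List.dropLast_reverse, List.mem_reverse, List.cons_append, List.tail_cons, List.mem_append,
    List.mem_singleton] at hx
  rcases hx with hx | rfl
  · have hprefix : a :: t ++ [s] <+: a :: t ++ s :: l2 := ⟨l2, by simp⟩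
    exact hmed x (mediator_of_isChain_flip hback hprefix.isInfix (by simpa using hx))
  · exact hsZ

/-- On an acyclic undirected d-connected path from `u` to `v`, the first
source node (in order from `u`) is an unblocked ancestor of `u` given `Z`. -/
theorem first_source_is_unblocked_ancestor {V : Type} [Fintype V]
    (E : V → V → Prop) (hacyc : AcyclicRel E) (Z : Set V) (u v : V)
    (hu : u ∉ Z) (hv : v ∉ Z) (l1 l2 : List V) (s : V)
    (hpath : UPathFrom E u v (l1 ++ s :: l2))
    (hconn : DConnPath E Z (l1 ++ s :: l2))
    (hs : SourceOn E (l1 ++ s :: l2) s)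
    (hfirst : ∀ x ∈ l1, ¬ SourceOn E (l1 ++ s :: l2) x) :
    UnblockedAnc E Z s u :=
  first_source_is_unblocked_ancestor_general E Z u v hu hv l1 l2 s hpath hconn hs hfirst
end

section
/- Let P be an acyclic undirected path in a DAG that is d-connected given Z. If x and y are two consecutive source nodes on P (confounders or source endpoints, with no source between them on P), then there exists z ∈ Z such that both x and y are unblocked ancestors of z given Z. -/
/-!
Between two consecutive sources `x` and `y` the path has no confounder, and its edges at `x`
and `y` point into the segment, so the orientation of the segment switches exactly once:
`x → ⋯ → c ← ⋯ ← y` with `c` a collider (it cannot be the single edge `x – y`, by acyclicity).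
The inner nodes of both legs are mediators, hence outside `Z`, and so are the sources `x`, `y`
(endpoints or confounders). By d-connection `c` has a descendant in `Z`; the first node of `Z`
on a directed path from `c` to it is the required `z`.
-/

theorem List.Nodup.eq_of_append_cons_eq {α : Type*} {s t s' t' : List α} {b : α}
    (hnd : (s ++ b :: t).Nodup) (h : s ++ b :: t = s' ++ b :: t') : s = s' ∧ t = t' := by
  classical
  have hs : b ∉ s := fun hb => (List.nodup_cons.mp (List.nodup_middle.mp hnd)).1 (by simp [hb])
  rw [h, List.nodup_middle, List.nodup_cons] at hnd
  have hs' : b ∉ s' := fun hb => hnd.1 (by simp [hb])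
  have hlen : s.length = s'.length := by
    simpa [List.idxOf_append_of_notMem hs, List.idxOf_append_of_notMem hs'] using
      congrArg (List.idxOf b) h
  obtain ⟨rfl, h'⟩ := List.append_inj h hlen
  exact ⟨rfl, (List.cons.inj h').2⟩

theorem List.mem_of_infix_cons_append_singleton {α : Type*} {p m q a b : α} {s : List α}
    (h : [p, m, q] <:+: a :: (s ++ [b])) : m ∈ s := by
  rcases List.infix_cons_iff.mp h with h | h
  · rcases s with _ | ⟨c, s⟩
    · simpa using h.length_le
    · simp_all
  · rcases List.infix_concat_iff.mp h with ⟨t, ht⟩ | h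
    · have : t ++ [p, m] = s :=
        (List.append_inj' (t₁ := [q]) (t₂ := [b]) (by simpa using ht) rfl).1
      simp [← this]
    · exact h.subset (by simp)

open Relation

section

variable {V : Type} {E : V → V → Prop} {Z : Set V} {l l' : List V}

theorem Mediator.mono (h : l <:+: l') {b : V} : Mediator E l b → Mediator E l' b
  | ⟨a, c, hi, hE⟩ => ⟨a, c, hi.trans h, hE⟩

theorem Confounder.mono (h : l <:+: l') {b : V} : Confounder E l b → Confounder E l' b
  | ⟨a, c, hi, hE⟩ => ⟨a, c, hi.trans h, hE⟩

theorem Collider.mono (h : l <:+: l') {b : V} : Collider E l b → Collider E l' b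
  | ⟨a, c, hi, hE⟩ => ⟨a, c, hi.trans h, hE⟩

theorem DConnPath.mono (h : l <:+: l') (hl' : DConnPath E Z l') : DConnPath E Z l :=
  ⟨fun b hb => hl'.1 b (hb.mono h), fun b hb => hl'.2.1 b (hb.mono h),
    fun b hb => hl'.2.2 b (hb.mono h)⟩

theorem SourceOn.reverse {x : V} (hx : SourceOn E l x) : SourceOn E l.reverse x := by
  rcases hx with ⟨b, h, hE⟩ | ⟨b, h, hE⟩ | ⟨a, c, h, hxa, hxc⟩
  · exact Or.inr (Or.inl ⟨b, by simpa using List.reverse_suffix.mpr h, hE⟩)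
  · exact Or.inl ⟨b, by simpa using List.reverse_prefix.mpr h, hE⟩
  · exact Or.inr (Or.inr ⟨c, a, by simpa using List.reverse_infix.mpr h, hxc, hxa⟩)

theorem SourceOn.notMem {u v x : V} (hx : SourceOn E l x) (hu : l.head? = some u)
    (hv : l.getLast? = some v) (huZ : u ∉ Z) (hvZ : v ∉ Z)
    (hconf : ∀ b, Confounder E l b → b ∉ Z) : x ∉ Z := by
  rcases hx with ⟨b, ⟨t, rfl⟩, -⟩ | ⟨b, ⟨t, rfl⟩, -⟩ | hx
  · simp_all
  · simp_all
  · exact hconf x hx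

theorem SourceOn.rel_next {s t : List V} {x n : V} (hl : l = s ++ x :: n :: t) (hnd : l.Nodup)
    (hx : SourceOn E l x) : E x n := by
  subst hl
  rcases hx with ⟨b, ⟨r, hr⟩, hE⟩ | ⟨b, ⟨r, hr⟩, -⟩ | ⟨a, c, ⟨r, r', hr⟩, -, hE⟩
  · obtain ⟨-, h⟩ := hnd.eq_of_append_cons_eq (s' := []) (t' := b :: r) (by simp [← hr])
    exact (List.cons.inj h).1 ▸ hE
  · obtain ⟨-, h⟩ := hnd.eq_of_append_cons_eq (s' := r ++ [b]) (t' := []) (by simp [← hr])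
    simp at h
  · obtain ⟨-, h⟩ :=
      hnd.eq_of_append_cons_eq (s' := r ++ [a]) (t' := c :: r') (by simp [← hr])
    exact (List.cons.inj h).1 ▸ hE

theorem SourceOn.rel_prev {s t : List V} {p y : V} (hl : l = s ++ p :: y :: t) (hnd : l.Nodup)
    (hy : SourceOn E l y) : E y p :=
  hy.reverse.rel_next (s := t.reverse) (t := s.reverse) (by simp [hl])
    (List.nodup_reverse.mpr hnd)

abbrev UnblockedStep (E : V → V → Prop) (Z : Set V) (a b : V) : Prop := E a b ∧ a ∉ Z

theorem unblockedAnc_of_reflTransGen {w z : V} (h : ReflTransGen (UnblockedStep E Z) w z) :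
    UnblockedAnc E Z w z := by
  induction h using ReflTransGen.head_induction_on with
  | refl => exact Or.inl rfl
  | @head a b hab _ ih =>
    refine Or.inr ?_
    rcases ih with rfl | ⟨L, hc, hh, hl, hL⟩
    · exact ⟨[a, b], List.isChain_pair.mpr hab.1, rfl, rfl, by simpa using hab.2⟩
    · obtain ⟨L, rfl⟩ : ∃ L', L = b :: L' := by
        rcases L with _ | ⟨c, L⟩ <;> simp_all
      refine ⟨a :: b :: L, List.isChain_cons_cons.mpr ⟨hab.1, hc⟩, rfl, by simpa using hl, ?_⟩
      intro t ht
      rw [List.dropLast_cons_cons, List.mem_cons] at ht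
      exact ht.elim (· ▸ hab.2) (hL t)

theorem Descendant.exists_mem_reflTransGen_unblockedStep {c d : V} (h : Descendant E c d)
    (hd : d ∈ Z) : ∃ z ∈ Z, ReflTransGen (UnblockedStep E Z) c z := by
  induction h using ReflTransGen.head_induction_on with
  | refl => exact ⟨d, hd, ReflTransGen.refl⟩
  | @head a b hab _ ih =>
    by_cases ha : a ∈ Z
    · exact ⟨a, ha, ReflTransGen.refl⟩
    · obtain ⟨z, hz, hbz⟩ := ih
      exact ⟨z, hz, hbz.head ⟨hab, ha⟩⟩

theorem reflTransGen_of_rel_head_of_no_confounder {a b y : V} {L : List V}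
    (hchain : (a :: b :: L).IsChain (fun p q => E p q ∨ E q p)) (hba : E b a)
    (hconf : ∀ m, ¬ Confounder E (a :: b :: L) m)
    (hmed : ∀ m, Mediator E (a :: b :: L) m → m ∉ Z)
    (hy : (a :: b :: L).getLast? = some y) (hyZ : y ∉ Z) :
    ReflTransGen (UnblockedStep E Z) y a := by
  induction L generalizing a b with
  | nil =>
    obtain rfl : b = y := by simpa using hy
    exact ReflTransGen.single ⟨hba, hyZ⟩
  | cons c L ih =>
    have htail : b :: c :: L <:+: a :: b :: c :: L := (List.suffix_cons _ _).isInfix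
    have hchain' := (List.isChain_cons_cons.mp hchain).2
    rcases (List.isChain_cons_cons.mp hchain').1 with hbc | hcb
    · exact (hconf b ⟨a, c, ⟨[], L, rfl⟩, hba, hbc⟩).elim
    · have hbZ : b ∉ Z := hmed b ⟨a, c, ⟨[], L, rfl⟩, Or.inr ⟨hba, hcb⟩⟩
      exact (ih hchain' hcb (fun m hm => hconf m (hm.mono htail))
        (fun m hm => hmed m (hm.mono htail)) (by simpa using hy)).tail ⟨hba, hbZ⟩

theorem exists_mem_reflTransGen_of_rel_head_of_no_confounder (hacyc : AcyclicRel E)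
    {a b p y : V} {L : List V}
    (hchain : (a :: b :: L).IsChain (fun p q => E p q ∨ E q p)) (hab : E a b) (haZ : a ∉ Z)
    (hconn : DConnPath E Z (a :: b :: L)) (hconf : ∀ m, ¬ Confounder E (a :: b :: L) m)
    (hpy : [p, y] <:+ a :: b :: L) (hyp : E y p) (hyZ : y ∉ Z) :
    ∃ z ∈ Z, ReflTransGen (UnblockedStep E Z) a z ∧ ReflTransGen (UnblockedStep E Z) y z := by
  induction L generalizing a b with
  | nil =>
    obtain ⟨rfl, rfl⟩ : p = a ∧ y = b := by simpa using hpy.eq_of_length rfl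
    exact (hacyc p (.head hab (.single hyp))).elim
  | cons c L ih =>
    have htail : b :: c :: L <:+: a :: b :: c :: L := (List.suffix_cons _ _).isInfix
    have hpy' : [p, y] <:+ b :: c :: L := by
      rcases List.suffix_cons_iff.mp hpy with h | h
      · simpa using congrArg List.length h
      · exact h
    have hchain' := (List.isChain_cons_cons.mp hchain).2
    rcases (List.isChain_cons_cons.mp hchain').1 with hbc | hcb
    · have hbZ : b ∉ Z := hconn.1 b ⟨a, c, ⟨[], L, rfl⟩, Or.inl ⟨hab, hbc⟩⟩
      obtain ⟨z, hz, hbz, hyz⟩ := ih hchain' hbc hbZ (hconn.mono htail)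
        (fun m hm => hconf m (hm.mono htail)) hpy'
      exact ⟨z, hz, hbz.head ⟨hab, haZ⟩, hyz⟩
    · obtain ⟨d, hd, hbd⟩ := hconn.2.2 b ⟨a, c, ⟨[], L, rfl⟩, hab, hcb⟩
      obtain ⟨z, hz, hbz⟩ := hbd.exists_mem_reflTransGen_unblockedStep hd
      have hyb := reflTransGen_of_rel_head_of_no_confounder hchain' hcb
        (fun m hm => hconf m (hm.mono htail)) (fun m hm => hconn.1 m (hm.mono htail))
        (by obtain ⟨t, ht⟩ := hpy'; simp [← ht]) hyZ
      exact ⟨z, hz, (ReflTransGen.single ⟨hab, haZ⟩).trans hbz, hyb.trans hbz⟩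

end

theorem consecutive_sources_share_conditioned_descendant_general {V : Type}
    (E : V → V → Prop) (hacyc : AcyclicRel E) (Z : Set V) (u v : V)
    (hu : u ∉ Z) (hv : v ∉ Z) (l1 l2 l3 : List V) (x y : V)
    (hpath : UPathFrom E u v (l1 ++ [x] ++ l2 ++ [y] ++ l3))
    (hconn : DConnPath E Z (l1 ++ [x] ++ l2 ++ [y] ++ l3))
    (hx : SourceOn E (l1 ++ [x] ++ l2 ++ [y] ++ l3) x)
    (hy : SourceOn E (l1 ++ [x] ++ l2 ++ [y] ++ l3) y)
    (hbetween : ∀ w ∈ l2, ¬ SourceOn E (l1 ++ [x] ++ l2 ++ [y] ++ l3) w) :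
    ∃ z ∈ Z, UnblockedAnc E Z x z ∧ UnblockedAnc E Z y z := by
  obtain ⟨⟨hchain, hnd⟩, hhead, hlast, -⟩ := hpath
  obtain ⟨n, r, hnr⟩ : ∃ n r, l2 ++ [y] = n :: r := by
    rcases l2 with _ | ⟨c, l2⟩ <;> exact ⟨_, _, rfl⟩
  obtain ⟨s, p, hsp⟩ : ∃ s p, x :: l2 = s ++ [p] :=
    ⟨(x :: l2).dropLast, _, (List.dropLast_append_getLast (List.cons_ne_nil _ _)).symm⟩
  have hseg : x :: n :: r <:+: l1 ++ [x] ++ l2 ++ [y] ++ l3 := ⟨l1, l3, by simp [← hnr]⟩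
  have hxn : E x n := hx.rel_next (s := l1) (t := r ++ l3)
    (by rw [← List.cons_append, ← hnr]; simp) hnd
  have hyp : E y p := hy.rel_prev (s := l1 ++ s) (t := l3)
    (by rw [show l1 ++ s ++ p :: y :: l3 = l1 ++ (s ++ [p]) ++ [y] ++ l3 by simp, ← hsp]; simp)
    hnd
  have hconf : ∀ m, ¬ Confounder E (x :: n :: r) m := fun m ⟨a, c, hi, hm⟩ =>
    hbetween m (List.mem_of_infix_cons_append_singleton (hnr ▸ hi))
      (Or.inr (Or.inr ⟨a, c, hi.trans hseg, hm⟩))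
  obtain ⟨z, hz, hxz, hyz⟩ := exists_mem_reflTransGen_of_rel_head_of_no_confounder hacyc
    (hchain.infix hseg) hxn (hx.notMem hhead hlast hu hv hconn.2.1) (hconn.mono hseg) hconf
    ⟨s, by rw [← hnr, show s ++ [p, y] = s ++ [p] ++ [y] by simp, ← hsp]; rfl⟩ hyp
    (hy.notMem hhead hlast hu hv hconn.2.1)
  exact ⟨z, hz, unblockedAnc_of_reflTransGen hxz, unblockedAnc_of_reflTransGen hyz⟩

/-- Two consecutive sources on an acyclic undirected d-connected path are both
unblocked ancestors of some common conditioned node `z ∈ Z`. -/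
theorem consecutive_sources_share_conditioned_descendant {V : Type} [Fintype V]
    (E : V → V → Prop) (hacyc : AcyclicRel E) (Z : Set V) (u v : V)
    (hu : u ∉ Z) (hv : v ∉ Z) (l1 l2 l3 : List V) (x y : V)
    (hpath : UPathFrom E u v (l1 ++ [x] ++ l2 ++ [y] ++ l3))
    (hconn : DConnPath E Z (l1 ++ [x] ++ l2 ++ [y] ++ l3))
    (hx : SourceOn E (l1 ++ [x] ++ l2 ++ [y] ++ l3) x)
    (hy : SourceOn E (l1 ++ [x] ++ l2 ++ [y] ++ l3) y)
    (hbetween : ∀ w ∈ l2, ¬ SourceOn E (l1 ++ [x] ++ l2 ++ [y] ++ l3) w) :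
    ∃ z ∈ Z, UnblockedAnc E Z x z ∧ UnblockedAnc E Z y z :=
  consecutive_sources_share_conditioned_descendant_general E hacyc Z u v hu hv l1 l2 l3 x y hpath
    hconn hx hy hbetween
end

section
/- Let P be an acyclic undirected d-connected path given Z from u to v in a DAG, partitioned so that every internal noncollider node of P is either a source (confounder, or endpoint with outgoing path edge) or a transmitter (exactly one path-adjacent parent). Define a graph function f where each source copies its exogenous term, each transmitter copies the value of its path-adjacent parent, and all other nodes are arbitrary. If U assigns the same value α to the exogenous term of every source on P, then every noncollider node w on P satisfies f_U(w) = α; in particular f_U(u) = f_U(v) = α. -/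
/-! Every noncollider on the path is a source or has a path-adjacent parent, and that parent
is again a noncollider: its neighbour on the path is a child, and an acyclic `E` has no
2-cycles. Well-founded induction on the ancestor relation, restricted to the finitely many
nodes of the path, therefore carries the common value α of the sources to every noncollider.
The endpoints are noncolliders because a collider needs neighbours on both sides. -/

section PathFacts

variable {V : Type}

theorem List.Nodup.eq_left_of_pair_infix {l : List V} {x y a : V} (hnd : l.Nodup)
    (hx : [x, y] <:+: l) (ha : [a, y] <:+: l) : x = a := by
  obtain ⟨s, r, rfl⟩ := hx
  obtain ⟨s', r', h⟩ := ha
  replace hnd : ((s ++ [x]) ++ y :: r).Nodup := by simpa using hnd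
  have hy : y ∉ s ++ [x] ∧ y ∉ r := by
    rw [List.nodup_append] at hnd
    exact ⟨fun hy => hnd.2.2 y hy y (List.mem_cons_self ..) rfl, (List.nodup_cons.1 hnd.2.1).1⟩
  have heq : (s ++ [x]) ++ y :: r = (s' ++ [a]) ++ y :: r' := by simpa using h.symm
  obtain ⟨-, rfl⟩ : s = s' ∧ x = a := by
    simpa using ((List.append_cons_inj_of_notMem hy.1 hy.2).1 heq).1
  rfl

theorem List.Nodup.eq_right_of_pair_infix {l : List V} {x y b : V} (hnd : l.Nodup)
    (hx : [y, x] <:+: l) (hb : [y, b] <:+: l) : x = b :=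
  List.nodup_reverse.2 hnd |>.eq_left_of_pair_infix
    (List.reverse_infix.2 hx) (List.reverse_infix.2 hb)

def PathAdj (l : List V) (a b : V) : Prop := [a, b] <:+: l ∨ [b, a] <:+: l

theorem PathAdj.symm {l : List V} {a b : V} (h : PathAdj l a b) : PathAdj l b a := Or.symm h

theorem PathAdj.mem_left {l : List V} {a b : V} (h : PathAdj l a b) : a ∈ l := by
  rcases h with h | h <;> exact h.subset (by simp)

variable {E : V → V → Prop} {l : List V}

theorem Collider.reverse {b : V} (h : Collider E l b) : Collider E l.reverse b := by
  obtain ⟨a, c, habc, hab, hcb⟩ := h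
  exact ⟨c, a, List.reverse_infix.2 habc, hcb, hab⟩

theorem not_collider_of_pathAdj_of_not_edge {a w : V} (hnd : l.Nodup) (hadj : PathAdj l a w)
    (ha : ¬ E a w) : ¬ Collider E l w := by
  rintro ⟨p, q, hpwq, hp, hq⟩
  have hpw : [p, w] <:+: l := (List.prefix_append [p, w] [q]).isInfix.trans hpwq
  have hwq : [w, q] <:+: l := (List.suffix_append [p] [w, q]).isInfix.trans hpwq
  rcases hadj with h | h
  · exact ha (hnd.eq_left_of_pair_infix hpw h ▸ hp)
  · exact ha (hnd.eq_right_of_pair_infix hwq h ▸ hq)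

theorem not_collider_of_head? {u : V} (hnd : l.Nodup) (hu : l.head? = some u) :
    ¬ Collider E l u := by
  rintro ⟨p, q, hpuq, -, -⟩
  obtain ⟨t, rfl⟩ := List.head?_eq_some_iff.1 hu
  have hpu : [p, u] <:+: u :: t := (List.prefix_append [p, u] [q]).isInfix.trans hpuq
  rcases List.infix_cons_iff.1 hpu with h | h
  · exact (List.nodup_cons.1 hnd).1 ((List.cons_prefix_cons.1 h).2.subset (by simp))
  · exact (List.nodup_cons.1 hnd).1 (h.subset (by simp))

theorem not_collider_of_getLast? {v : V} (hnd : l.Nodup) (hv : l.getLast? = some v) :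
    ¬ Collider E l v := fun h =>
  not_collider_of_head? (List.nodup_reverse.2 hnd) (by rwa [List.head?_reverse]) h.reverse

theorem sourceOn_or_exists_pathAdj_parent (hchain : l.IsChain (fun a b => E a b ∨ E b a))
    (hlen : 2 ≤ l.length) {w : V} (hw : w ∈ l) :
    SourceOn E l w ∨ ∃ a, PathAdj l a w ∧ E a w := by
  refine or_iff_not_imp_right.2 fun hparent => ?_
  have hout : ∀ a, PathAdj l a w → E w a := by
    rintro a (h | h)
    · exact (List.isChain_pair.1 (hchain.infix h)).resolve_left
        fun haw => hparent ⟨a, .inl h, haw⟩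
    · exact (List.isChain_pair.1 (hchain.infix h)).resolve_right
        fun haw => hparent ⟨a, .inr h, haw⟩
  obtain ⟨s, r, rfl⟩ := List.append_of_mem hw
  rcases s.eq_nil_or_concat with rfl | ⟨s, a, rfl⟩ <;> rcases r with _ | ⟨c, r⟩
  · simp at hlen
  · exact .inl ⟨c, ⟨r, by simp⟩, hout c (.inr ⟨[], r, by simp⟩)⟩
  · exact .inr (.inl ⟨a, ⟨s, by simp⟩, hout a (.inl ⟨s, [], by simp⟩)⟩)
  · exact .inr (.inr ⟨a, c, ⟨s, r, by simp⟩, hout a (.inl ⟨s, c :: r, by simp⟩),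
      hout c (.inr ⟨s ++ [a], r, by simp⟩)⟩)

theorem eq_on_noncolliders_of_eq_on_sources {X : Type} (hacyc : AcyclicRel E)
    (hpath : UPath E l) (hlen : 2 ≤ l.length) {g : V → X} {α : X}
    (hsource : ∀ s, SourceOn E l s → g s = α)
    (htrans : ∀ a b, PathAdj l a b → E a b → ¬ Collider E l b → g b = g a) :
    ∀ w ∈ l, ¬ Collider E l w → g w = α := by
  have : IsStrictOrder V (Relation.TransGen E) :=
    { irrefl := hacyc, trans := fun _ _ _ => Relation.TransGen.trans }
  intro w hw
  refine (l.finite_toSet.wellFoundedOn (r := Relation.TransGen E)).induction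
    (P := fun w => ¬ Collider E l w → g w = α) hw ?_
  intro w hw ih hncol
  rcases sourceOn_or_exists_pathAdj_parent hpath.1 hlen hw with hs | ⟨a, hadj, haw⟩
  · exact hsource w hs
  · have hwa : ¬ E w a := fun hwa => hacyc a (.tail (.single haw) hwa)
    rw [htrans a w hadj haw hncol]
    exact ih a hadj.mem_left (.single haw)
      (not_collider_of_pathAdj_of_not_edge hpath.2 hadj.symm hwa)

end PathFacts

theorem source_fixed_equates_noncollider_values_general {V X : Type}
    (E : V → V → Prop) (hacyc : AcyclicRel E) (u v : V)
    (l : List V)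
    (hpath : UPathFrom E u v l)
    (f : (V → X) → V → X)
    (hsource : ∀ (U' : V → X) (s : V), SourceOn E l s → f U' s = U' s)
    (htrans : ∀ (U' : V → X) (a b : V),
      ([a, b] <:+: l ∨ [b, a] <:+: l) → E a b → ¬ Collider E l b →
      f U' b = f U' a)
    (U : V → X) (α : X) (hU : ∀ s, SourceOn E l s → U s = α) :
    (∀ w ∈ l, ¬ Collider E l w → f U w = α) ∧ f U u = α ∧ f U v = α := by
  obtain ⟨hupath, hu, hv, hlen⟩ := hpath
  have key := eq_on_noncolliders_of_eq_on_sources hacyc hupath hlen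
    (fun s hs => (hsource U s hs).trans (hU s hs)) (htrans U)
  exact ⟨key, key u (List.mem_of_mem_head? hu) (not_collider_of_head? hupath.2 hu),
    key v (List.mem_of_getLast? hv) (not_collider_of_getLast? hupath.2 hv)⟩

/-- On a d-connected path where sources copy their exogenous term and
transmitters copy their path-adjacent parent, a source-fixed assignment makes
every noncollider on the path (in particular both endpoints) evaluate to α. -/
theorem source_fixed_equates_noncollider_values {V X : Type} [Fintype V]
    (E : V → V → Prop) (hacyc : AcyclicRel E) (Z : Set V) (u v : V)
    (l : List V)
    (hpath : UPathFrom E u v l) (hconn : DConnPath E Z l)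
    (f : (V → X) → V → X)
    (hsource : ∀ (U' : V → X) (s : V), SourceOn E l s → f U' s = U' s)
    (htrans : ∀ (U' : V → X) (a b : V),
      ([a, b] <:+: l ∨ [b, a] <:+: l) → E a b → ¬ Collider E l b →
      f U' b = f U' a)
    (U : V → X) (α : X) (hU : ∀ s, SourceOn E l s → U s = α) :
    (∀ w ∈ l, ¬ Collider E l w → f U w = α) ∧ f U u = α ∧ f U v = α :=
  source_fixed_equates_noncollider_values_general E hacyc u v l hpath f hsource htrans U α hU
end
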